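/- arXiv:1812.04665 — 2 statements merged into one kernel-verified Lean document; each statement's English description precedes it below -/
import Mathlib

section
/- Let P_ε(z) = z(z^k + ε₁z + ε₀) with k ≥ 2, and let σ(z) = e^{((2m+1)/k)πi} · conj(z). If ε₁' = -e^{-((2m+1)/k)πi} · conj(ε₁) and ε₀' = -conj(ε₀), then for any real-time solution z(t) of dz/dt = P_ε(z), the curve Z(t) = σ(z(-t)) is a solution of dZ/dT = P_{ε'}(Z). -/
open Complex
open scoped Real ComplexConjugate

/-!
Reversing time and conjugating turns `z' = P_ε(z)` into `Z' = -c · conj (P_ε(z(-t)))` for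
`Z(t) = c · conj (z(-t))`. When `c^k = -1` the leading term matches, since
`(c w)^(k+1) = -c w^(k+1)`, and the sign change on the lower-order terms is absorbed into `ε'`.
-/

def P (k : ℕ) (ε₁ ε₀ z : ℂ) : ℂ := z * (z ^ k + ε₁ * z + ε₀)

theorem HasDerivAt.comp_neg {𝕜 F : Type*} [NontriviallyNormedField 𝕜] [NormedAddCommGroup F]
    [NormedSpace 𝕜 F] {f : 𝕜 → F} {f' : F} {x : 𝕜} (hf : HasDerivAt f f' (-x)) :
    HasDerivAt (fun y => f (-y)) (-f') x := by
  simpa [Function.comp_def] using hf.scomp x (hasDerivAt_neg x)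

theorem HasDerivAt.const_mul_conj_comp_neg {z : ℝ → ℂ} {v : ℂ} {t : ℝ} (c : ℂ)
    (hz : HasDerivAt z v (-t)) :
    HasDerivAt (fun s => c * conj (z (-s))) (-(c * conj v)) t := by
  simpa using hz.comp_neg.star.const_mul c

theorem exp_odd_div_mul_pi_I_pow {k : ℕ} (hk : k ≠ 0) (m : ℤ) :
    exp ((2 * m + 1) / k * π * I) ^ k = -1 := by
  rw [← exp_nat_mul, show (k : ℂ) * ((2 * m + 1) / k * π * I) = ((2 * m + 1 : ℤ) : ℂ) * (π * I) by
    push_cast; field_simp, exp_int_mul, exp_pi_mul_I]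
  exact Odd.neg_one_zpow ⟨m, rfl⟩

section Symmetry

variable {k : ℕ} {c ε₁ ε₀ ε₁' ε₀' : ℂ}

theorem P_const_mul_conj (hc : c ^ k = -1) (hε₁ : ε₁' * c = -conj ε₁) (hε₀ : ε₀' = -conj ε₀)
    (w : ℂ) : P k ε₁' ε₀' (c * conj w) = -(c * conj (P k ε₁ ε₀ w)) := by
  simp only [P, map_mul, map_add, map_pow, mul_pow, hc, hε₀]
  linear_combination c * conj w ^ 2 * hε₁

theorem hasDerivAt_const_mul_conj_comp_neg_of_P (hc : c ^ k = -1) (hε₁ : ε₁' * c = -conj ε₁)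
    (hε₀ : ε₀' = -conj ε₀) {z : ℝ → ℂ} (hz : ∀ t, HasDerivAt z (P k ε₁ ε₀ (z t)) t) (t : ℝ) :
    HasDerivAt (fun s => c * conj (z (-s))) (P k ε₁' ε₀' (c * conj (z (-t)))) t := by
  rw [P_const_mul_conj hc hε₁ hε₀]
  exact (hz (-t)).const_mul_conj_comp_neg c

end Symmetry

theorem stmt1 (k : ℕ) (hk : 2 ≤ k) (m : ℤ) (ε₁ ε₀ ε₁' ε₀' : ℂ)
    (hε₁ : ε₁' = -Complex.exp (-((2 * (m : ℂ) + 1) / k) * (Real.pi : ℂ) * Complex.I) * (starRingEnd ℂ) ε₁)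
    (hε₀ : ε₀' = -(starRingEnd ℂ) ε₀)
    (z : ℝ → ℂ)
    (hz : ∀ t : ℝ, HasDerivAt z (z t * ((z t) ^ k + ε₁ * z t + ε₀)) t) :
    ∀ t : ℝ, HasDerivAt
      (fun s : ℝ => Complex.exp (((2 * (m : ℂ) + 1) / k) * (Real.pi : ℂ) * Complex.I) * (starRingEnd ℂ) (z (-s)))
      ((Complex.exp (((2 * (m : ℂ) + 1) / k) * (Real.pi : ℂ) * Complex.I) * (starRingEnd ℂ) (z (-t))) *
        ((Complex.exp (((2 * (m : ℂ) + 1) / k) * (Real.pi : ℂ) * Complex.I) * (starRingEnd ℂ) (z (-t))) ^ k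
          + ε₁' * (Complex.exp (((2 * (m : ℂ) + 1) / k) * (Real.pi : ℂ) * Complex.I) * (starRingEnd ℂ) (z (-t)))
          + ε₀')) t := by
  have hc := exp_odd_div_mul_pi_I_pow (by omega : k ≠ 0) m
  have hε₁c : ε₁' * exp ((2 * m + 1) / k * π * I) = -conj ε₁ := by
    rw [hε₁, neg_mul, neg_mul, mul_right_comm, ← exp_add]
    ring_nf
    rw [exp_zero, one_mul]
  exact hasDerivAt_const_mul_conj_comp_neg_of_P hc hε₁c hε₀ hz
end

section
/- Let k ≥ 2, s ∈ (0,1), θ ∈ ℝ, and let z_j ≠ 0 satisfy z_j^k - k(1-s)^{k-1}z_j + (k-1)s^k e^{iθ} = 0. If the eigenvalue λ_j = k(k-1)((1-s)^{k-1}z_j - s^k e^{iθ}) is a real multiple of λ₀ = (k-1)s^k e^{iθ} (i.e. λ_j ∈ ℝ·e^{iθ}), then (k-1)θ ∈ πℤ. -/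
/-!
Collinearity of `λ_j` with `λ₀` says that `(1 - s)^(k-1) z_j` is a real multiple of `e^{iθ}`, so
`z_j = r e^{iθ}` with `r` real and nonzero. Substituting into the root equation gives
`r^k e^{ikθ} ∈ ℝ e^{iθ}`, i.e. `e^{i(k-1)θ}` is real, so `sin ((k-1)θ) = 0`.
-/

open Complex

lemma exists_ofReal_mul_of_collinear {z e : ℂ} {a b c m : ℝ} (hm : m ≠ 0) (ha : a ≠ 0)
    (h : (m : ℂ) * (a * z - b * e) = c * (b * e)) : ∃ r : ℝ, z = r * e := by
  refine ⟨(c / m + 1) * b / a, ?_⟩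
  have hmC : (m : ℂ) ≠ 0 := ofReal_ne_zero.mpr hm
  have haC : (a : ℂ) ≠ 0 := ofReal_ne_zero.mpr ha
  push_cast
  field_simp
  linear_combination h

lemma sin_sub_one_mul_eq_zero_of_pow_eq {θ r a : ℝ} {k : ℕ} (hr : r ≠ 0)
    (h : ((r : ℂ) * exp (θ * I)) ^ k = a * exp (θ * I)) :
    Real.sin (((k : ℝ) - 1) * θ) = 0 := by
  have hexp : exp (θ * I) ^ k = exp ((((k : ℝ) - 1) * θ : ℝ) * I) * exp (θ * I) := by
    rw [← exp_nat_mul, ← exp_add]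
    push_cast
    ring_nf
  have hreal : ((r ^ k : ℝ) : ℂ) * exp ((((k : ℝ) - 1) * θ : ℝ) * I) = a := by
    apply mul_right_cancel₀ (exp_ne_zero (θ * I))
    rw [mul_assoc, ← hexp, ofReal_pow, ← mul_pow, h]
  have him := congrArg im hreal
  rw [im_ofReal_mul, exp_ofReal_mul_I_im, ofReal_im] at him
  exact (mul_eq_zero.mp him).resolve_left (pow_ne_zero k hr)

theorem stmt7_general (k : ℕ) (hk : 2 ≤ k) (s θ : ℝ) (hs1 : s < 1)
    (zj : ℂ) (hzj : zj ≠ 0)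
    (hroot : zj ^ k - (k : ℂ) * ((1 : ℂ) - s) ^ (k - 1) * zj
      + ((k : ℂ) - 1) * (s : ℂ) ^ k * Complex.exp (θ * Complex.I) = 0)
    (hcol : ∃ c : ℝ,
      (k : ℂ) * ((k : ℂ) - 1) *
          (((1 : ℂ) - s) ^ (k - 1) * zj - (s : ℂ) ^ k * Complex.exp (θ * Complex.I))
        = (c : ℂ) * (((k : ℂ) - 1) * (s : ℂ) ^ k * Complex.exp (θ * Complex.I))) :
    ∃ n : ℤ, ((k : ℝ) - 1) * θ = n * Real.pi := by
  obtain ⟨c, hc⟩ := hcol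
  have hk0 : (k : ℝ) ≠ 0 := Nat.cast_ne_zero.mpr (by omega)
  have hk1 : (k : ℂ) - 1 ≠ 0 := by
    rw [sub_ne_zero]; exact_mod_cast (show k ≠ 1 by omega)
  obtain ⟨r, rfl⟩ := exists_ofReal_mul_of_collinear (z := zj) (e := exp (θ * I))
    (a := (1 - s) ^ (k - 1)) (b := s ^ k) (c := c) hk0 (pow_ne_zero _ (sub_ne_zero.mpr hs1.ne'))
    (mul_left_cancel₀ hk1 (by push_cast; linear_combination hc))
  have hr : r ≠ 0 := by rintro rfl; simp at hzj
  have hsin := sin_sub_one_mul_eq_zero_of_pow_eq (θ := θ) (k := k)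
    (a := k * (1 - s) ^ (k - 1) * r - (k - 1) * s ^ k) hr
    (by push_cast; linear_combination hroot)
  obtain ⟨n, hn⟩ := Real.sin_eq_zero_iff.mp hsin
  exact ⟨n, hn.symm⟩

theorem stmt7 (k : ℕ) (hk : 2 ≤ k) (s θ : ℝ) (hs : 0 < s) (hs1 : s < 1)
    (zj : ℂ) (hzj : zj ≠ 0)
    (hroot : zj ^ k - (k : ℂ) * ((1 : ℂ) - s) ^ (k - 1) * zj
      + ((k : ℂ) - 1) * (s : ℂ) ^ k * Complex.exp (θ * Complex.I) = 0)
    (hcol : ∃ c : ℝ,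
      (k : ℂ) * ((k : ℂ) - 1) *
          (((1 : ℂ) - s) ^ (k - 1) * zj - (s : ℂ) ^ k * Complex.exp (θ * Complex.I))
        = (c : ℂ) * (((k : ℂ) - 1) * (s : ℂ) ^ k * Complex.exp (θ * Complex.I))) :
    ∃ n : ℤ, ((k : ℝ) - 1) * θ = n * Real.pi :=
  stmt7_general k hk s θ hs1 zj hzj hroot hcol
end
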